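/- Let q be a prime power and let f ∈ F_q[T][X] be nonconstant in X with f(u) ≠ 0 (as an element of F_q[T]) for every u ∈ F_q. Assume f splits completely over F_q((T)) and (q+1)·deg_T f = deg_X f. Then every primitive polynomial g ∈ F_q[T][X] that is irreducible over F_q(T) and divides f satisfies deg_X g = (q+1)·deg_T g, and moreover q+1 divides deg_X g. (Equivalently: every root of f has height exactly 1/(q+1) and degree over F_q(T) divisible by q+1.) -/

import Mathlib

/-!
Let `g ∈ F[T][X]` have no root in `F` and split over `F((T))`, let `α` run over its roots there,
`v` be the `T`-adic order and `q = |F|`. For `u ∈ F`, `v(g(u)) = v(lc g) + ∑_α v(u - α)`. A root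
with a pole of order `m > 0` contributes `-m` for every `u`; an integral root contributes `≥ 0`
for every `u` and `≥ 1` for `u = α(0)`. Hence `∑_u ∑_α v(u - α) ≥ deg_X g - (q + 1) M`, with `M`
the total pole order of the roots, and Gauss's lemma over `F⟦T⟧` gives `M ≤ v(lc g) ≤ deg_T g`.
As also `v(g(u)) ≤ deg_T g`, summing over `u` gives `deg_X g ≤ (q + 1) deg_T g`. Both degrees
are additive, so equality for `f` forces equality for each of its factors.
-/

open Polynomial

/-- The `T`-degree of `f ∈ F[T][X]`: the maximal `T`-degree of its coefficients
(the variable of the inner polynomial ring plays the role of `T`). -/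
noncomputable def degT {F : Type*} [Field F] (f : Polynomial (Polynomial F)) : ℕ :=
  f.support.sup fun i => (f.coeff i).natDegree

/-- View `f ∈ F[T][X]` as a polynomial in `X` over the rational function field `F(T)`. -/
noncomputable def toRat {F : Type*} [Field F] (f : Polynomial (Polynomial F)) :
    Polynomial (RatFunc F) :=
  f.map (algebraMap (Polynomial F) (RatFunc F))

/-- `f ∈ F[T][X]` splits completely (into linear factors) over the
Laurent series field `F((T))`. -/
def SplitsCompletely {F : Type*} [Field F] (f : Polynomial (Polynomial F)) : Prop :=
  Polynomial.Splits (f.map (algebraMap (Polynomial F) (LaurentSeries F)))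

theorem Polynomial.Bivariate.coeff_coeff_swap {R : Type*} [CommSemiring R]
    (f : Polynomial (Polynomial R)) (i j : ℕ) :
    ((swap f).coeff j).coeff i = (f.coeff i).coeff j := by
  induction f using Polynomial.induction_on' with
  | add f g hf hg => simp only [map_add, coeff_add, hf, hg]
  | monomial n a =>
    induction a using Polynomial.induction_on' with
    | add a b ha hb => simp only [map_add, coeff_add, ha, hb]
    | monomial m r =>
      rw [swap_monomial_monomial, coeff_monomial, coeff_monomial]
      split_ifs <;> simp [coeff_monomial, *]

section DegT

variable {F : Type*} [Field F]

theorem natDegree_coeff_le_degT (f : Polynomial (Polynomial F)) (i : ℕ) :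
    (f.coeff i).natDegree ≤ degT f := by
  by_cases hi : f.coeff i = 0
  · simp [hi]
  · exact Finset.le_sup (f := fun i => (f.coeff i).natDegree) (mem_support_iff.2 hi)

theorem natDegree_swap_eq_degT (f : Polynomial (Polynomial F)) :
    (Bivariate.swap f).natDegree = degT f := by
  refine le_antisymm (natDegree_le_iff_coeff_eq_zero.2 fun j hj => ?_)
    (Finset.sup_le fun i hi => ?_)
  · ext i
    rw [Bivariate.coeff_coeff_swap, coeff_zero]
    exact coeff_eq_zero_of_natDegree_lt ((natDegree_coeff_le_degT f i).trans_lt hj)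
  · refine le_natDegree_of_ne_zero fun h => leadingCoeff_ne_zero.2 (mem_support_iff.1 hi) ?_
    rw [leadingCoeff, ← Bivariate.coeff_coeff_swap, h, coeff_zero]

theorem degT_mul {f g : Polynomial (Polynomial F)} (hf : f ≠ 0) (hg : g ≠ 0) :
    degT (f * g) = degT f + degT g := by
  simp only [← natDegree_swap_eq_degT, map_mul]
  exact natDegree_mul (by simpa using hf) (by simpa using hg)

theorem natDegree_eval_C_le_degT (f : Polynomial (Polynomial F)) (u : F) :
    (f.eval (C u)).natDegree ≤ degT f := by
  rw [eval_eq_sum_range]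
  refine natDegree_sum_le_of_forall_le _ _ fun i _ => ?_
  rw [← C_pow]
  exact (natDegree_mul_C_le _ _).trans (natDegree_coeff_le_degT f i)

end DegT

namespace HahnSeries

variable {Γ R : Type*}

theorem order_multiset_prod [AddCommMonoid Γ] [LinearOrder Γ] [IsOrderedCancelAddMonoid Γ]
    [CommRing R] [IsDomain R] (s : Multiset (HahnSeries Γ R)) (hs : ∀ x ∈ s, x ≠ 0) :
    s.prod.order = (s.map order).sum := by
  induction s using Multiset.induction with
  | empty => simp
  | cons a s ih =>
    rw [Multiset.forall_mem_cons] at hs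
    rw [Multiset.prod_cons, order_mul hs.1 (Multiset.prod_ne_zero fun h => hs.2 0 h rfl),
      Multiset.map_cons, Multiset.sum_cons, ih hs.2]

theorem order_eval_of_splits [AddCommMonoid Γ] [LinearOrder Γ] [IsOrderedCancelAddMonoid Γ]
    [CommRing R] [IsDomain R] {p : Polynomial (HahnSeries Γ R)} (hp : p.Splits)
    {x : HahnSeries Γ R} (hx : p.eval x ≠ 0) :
    (p.eval x).order = p.leadingCoeff.order + (p.roots.map fun α => (x - α).order).sum := by
  rw [hp.eval_eq_prod_roots] at hx ⊢
  obtain ⟨hlc, hprod⟩ := mul_ne_zero_iff.1 hx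
  rw [order_mul hlc hprod,
    order_multiset_prod _ fun y hy h => hprod (Multiset.prod_eq_zero (h ▸ hy)), Multiset.map_map]
  rfl

end HahnSeries

namespace LaurentSeries

open HahnSeries (ofPowerSeries)

theorem order_ofPowerSeries_nonneg {R : Type*} [Semiring R] (a : PowerSeries R) :
    0 ≤ (ofPowerSeries ℤ R a).order := by
  rcases eq_or_ne (ofPowerSeries ℤ R a) 0 with h | h
  · simp [h]
  · exact (HahnSeries.le_order_iff_forall h).2 fun j hj => by simp [PowerSeries.coeff_coe, hj]

theorem exists_ofPowerSeries_eq_of_order_nonneg {R : Type*} [Semiring R] {x : LaurentSeries R}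
    (hx : 0 ≤ x.order) : ∃ a : PowerSeries R, ofPowerSeries ℤ R a = x :=
  ⟨_, X_order_mul_powerSeriesPart (Int.toNat_of_nonneg hx)⟩

noncomputable def poleOrder {R : Type*} [Zero R] (x : LaurentSeries R) : ℤ := max 0 (-x.order)

theorem sum_map_poleOrder {R : Type*} [Zero R] (s : Multiset (LaurentSeries R)) :
    (s.map poleOrder).sum = -((s.filter (·.order < 0)).map (·.order)).sum := by
  induction s using Multiset.induction with
  | empty => simp
  | cons α s ih =>
    by_cases h : α.order < 0
    · simp [h, ih, poleOrder, h.le, add_comm]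
    · simp [h, ih, poleOrder, not_lt.1 h]

section Ring

variable {R : Type*} [Ring R]

theorem coeff_C_sub_of_neg (u : R) (α : LaurentSeries R) {j : ℤ} (hj : j < 0) :
    (HahnSeries.C u - α).coeff j = -α.coeff j := by
  simp [HahnSeries.C_apply, hj.ne]

theorem order_C_sub_of_order_neg (u : R) {α : LaurentSeries R} (hα : α.order < 0) :
    (HahnSeries.C u - α).order = α.order := by
  have hα0 : α ≠ 0 := by rintro rfl; simp at hα
  have hcoeff : (HahnSeries.C u - α).coeff α.order ≠ 0 := by
    rw [coeff_C_sub_of_neg u α hα, neg_ne_zero]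
    exact mt HahnSeries.coeff_order_eq_zero.1 hα0
  refine le_antisymm (HahnSeries.order_le_of_coeff_ne_zero hcoeff) ?_
  refine (HahnSeries.le_order_iff_forall (HahnSeries.ne_zero_of_coeff_ne_zero hcoeff)).2
    fun j hj => ?_
  rw [coeff_C_sub_of_neg u α (hj.trans hα), HahnSeries.coeff_eq_zero_of_lt_order hj, neg_zero]

theorem order_C_sub_nonneg (u : R) {α : LaurentSeries R} (hα : 0 ≤ α.order) :
    0 ≤ (HahnSeries.C u - α).order := by
  rcases eq_or_ne (HahnSeries.C u - α) 0 with h | h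
  · rw [h, HahnSeries.order_zero]
  refine (HahnSeries.le_order_iff_forall h).2 fun j hj => ?_
  rw [coeff_C_sub_of_neg u α hj, HahnSeries.coeff_eq_zero_of_lt_order (hj.trans_le hα), neg_zero]

theorem one_le_order_C_coeff_zero_sub {α : LaurentSeries R} (hα : 0 ≤ α.order)
    (h : HahnSeries.C (α.coeff 0) - α ≠ 0) : 1 ≤ (HahnSeries.C (α.coeff 0) - α).order := by
  refine (HahnSeries.le_order_iff_forall h).2 fun j hj => ?_
  obtain hj | rfl : j < 0 ∨ j = 0 := by omega
  · rw [coeff_C_sub_of_neg _ α hj, HahnSeries.coeff_eq_zero_of_lt_order (hj.trans_le hα),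
      neg_zero]
  · simp

theorem one_le_sum_order_C_sub_add_mul_poleOrder [Fintype R] {α : LaurentSeries R}
    (hα : ∀ u : R, HahnSeries.C u ≠ α) :
    1 ≤ ∑ u : R, (HahnSeries.C u - α).order + (Fintype.card R + 1) * poleOrder α := by
  rcases lt_or_ge α.order 0 with hneg | hnonneg
  · simp only [order_C_sub_of_order_neg _ hneg, Finset.sum_const, Finset.card_univ, nsmul_eq_mul,
      poleOrder, max_eq_right (neg_nonneg.2 hneg.le)]
    linarith
  · rw [poleOrder, max_eq_left (neg_nonpos.2 hnonneg), mul_zero, add_zero]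
    exact (one_le_order_C_coeff_zero_sub hnonneg (sub_ne_zero.2 (hα _))).trans
      (Finset.single_le_sum (fun u _ => order_C_sub_nonneg u hnonneg) (Finset.mem_univ _))

end Ring

theorem exists_monic_map_eq_prod_X_sub_C_of_order_nonneg {R : Type*} [CommRing R]
    (s : Multiset (LaurentSeries R)) (hs : ∀ α ∈ s, 0 ≤ α.order) :
    ∃ Q : (PowerSeries R)[X],
      Q.Monic ∧ Q.map (ofPowerSeries ℤ R) = (s.map (X - C ·)).prod := by
  induction s using Multiset.induction with
  | empty => exact ⟨1, monic_one, by simp⟩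
  | cons α s ih =>
    rw [Multiset.forall_mem_cons] at hs
    obtain ⟨a, rfl⟩ := exists_ofPowerSeries_eq_of_order_nonneg hs.1
    obtain ⟨Q, hQ, hQs⟩ := ih hs.2
    exact ⟨(X - C a) * Q, (monic_X_sub_C a).mul hQ, by simp [hQs]⟩

theorem sum_poleOrder_roots_le_order_leadingCoeff {R : Type*} [CommRing R] [IsDomain R]
    {p : (PowerSeries R)[X]} (hp : (p.map (ofPowerSeries ℤ R)).Splits) :
    ((p.map (ofPowerSeries ℤ R)).roots.map poleOrder).sum
      ≤ (p.map (ofPowerSeries ℤ R)).leadingCoeff.order := by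
  generalize hPdef : p.map (ofPowerSeries ℤ R) = P at hp ⊢
  rcases eq_or_ne P.leadingCoeff 0 with hlc | hlc
  · simp [leadingCoeff_eq_zero.1 hlc]
  set poles := P.roots.filter (·.order < 0)
  set ints := P.roots.filter (¬ ·.order < 0)
  have hP : P = (ints.map (X - C ·)).prod * (C P.leadingCoeff * (poles.map (X - C ·)).prod) := by
    conv_lhs => rw [hp.eq_prod_roots, ← Multiset.filter_add_not (·.order < 0) P.roots]
    rw [Multiset.map_add, Multiset.prod_add]
    ring
  obtain ⟨Q, hQ, hQints⟩ := exists_monic_map_eq_prod_X_sub_C_of_order_nonneg ints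
    fun α hα => not_lt.1 (Multiset.mem_filter.1 hα).2
  -- Gauss's lemma: division by the monic lift `Q` of the integral-root factor stays in
  -- `R⟦X⟧[X]`, so the cofactor's constant term `lc * ∏ (-α)`, over the poles `α`, is integral.
  have hcofactor : (p /ₘ Q).map (ofPowerSeries ℤ R)
      = C P.leadingCoeff * (poles.map (X - C ·)).prod := by
    rw [map_divByMonic _ hQ, hQints, hPdef]
    conv_lhs => rw [hP]
    exact mul_divByMonic_cancel_left _ (hQints ▸ hQ.map _)
  have hpoles : ∀ x ∈ poles.map (fun α => -α), x ≠ 0 := by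
    simp only [Multiset.mem_map, poles, Multiset.mem_filter]
    rintro _ ⟨α, ⟨-, hα⟩, rfl⟩ h
    simp [neg_eq_zero.1 h] at hα
  have hconst : 0 ≤ P.leadingCoeff.order + (poles.map (·.order)).sum := by
    have h0 : ofPowerSeries ℤ R ((p /ₘ Q).coeff 0)
        = P.leadingCoeff * (poles.map fun α => -α).prod := by
      rw [← coeff_map, hcofactor]
      simp [coeff_zero_eq_eval_zero, eval_multiset_prod]
    have := order_ofPowerSeries_nonneg ((p /ₘ Q).coeff 0)
    rw [h0, HahnSeries.order_mul hlc (Multiset.prod_ne_zero fun h => hpoles 0 h rfl),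
      HahnSeries.order_multiset_prod _ hpoles, Multiset.map_map] at this
    simpa only [Function.comp_def, HahnSeries.order_neg] using this
  rw [sum_map_poleOrder]
  linarith

theorem order_algebraMap_le_natDegree {R : Type*} [CommSemiring R] {a : R[X]} (ha : a ≠ 0) :
    (algebraMap R[X] (LaurentSeries R) a).order ≤ a.natDegree := by
  apply HahnSeries.order_le_of_coeff_ne_zero
  simpa [Polynomial.algebraMap_hahnSeries_apply, PowerSeries.coeff_coe] using ha

theorem card_roots_add_mul_order_leadingCoeff_le {F : Type*} [Field F] [Fintype F]
    {P : (LaurentSeries F)[X]} (hP : P.Splits) (hroot : ∀ u : F, P.eval (HahnSeries.C u) ≠ 0) :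
    (P.roots.card : ℤ) + Fintype.card F * P.leadingCoeff.order
      ≤ ∑ u : F, (P.eval (HahnSeries.C u)).order
        + (Fintype.card F + 1) * (P.roots.map poleOrder).sum := by
  have hsum : ∑ u : F, (P.eval (HahnSeries.C u)).order
      = Fintype.card F * P.leadingCoeff.order
        + (P.roots.map fun α => ∑ u : F, (HahnSeries.C u - α).order).sum := by
    rw [Finset.sum_congr rfl fun u _ => HahnSeries.order_eval_of_splits hP (hroot u),
      Finset.sum_add_distrib]
    simp only [Finset.sum_const, Finset.card_univ, nsmul_eq_mul]
    congr 1
    exact Multiset.sum_map_sum_map _ _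
  have hroots : ∀ α ∈ P.roots, ∀ u : F, HahnSeries.C u ≠ α := by
    rintro α hα u rfl
    exact hroot u (mem_roots'.1 hα).2
  calc (P.roots.card : ℤ) + Fintype.card F * P.leadingCoeff.order
      = (P.roots.map fun _ => (1 : ℤ)).sum + Fintype.card F * P.leadingCoeff.order := by simp
    _ ≤ (P.roots.map fun α =>
          ∑ u : F, (HahnSeries.C u - α).order + (Fintype.card F + 1) * poleOrder α).sum
          + Fintype.card F * P.leadingCoeff.order :=
        add_le_add (Multiset.sum_map_le_sum_map _ _ fun α hα =>
          one_le_sum_order_C_sub_add_mul_poleOrder (hroots α hα)) le_rfl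
    _ = _ := by rw [hsum, Multiset.sum_map_add, Multiset.sum_map_mul_left]; ring

end LaurentSeries

theorem SplitsCompletely.of_dvd {F : Type*} [Field F] {f g : Polynomial (Polynomial F)}
    (hf : SplitsCompletely f) (hf0 : f ≠ 0) (hgf : g ∣ f) : SplitsCompletely g :=
  Splits.of_dvd hf ((Polynomial.map_ne_zero_iff (algebraMap_hahnSeries_injective ℤ)).2 hf0)
    (Polynomial.map_dvd _ hgf)

open LaurentSeries in
theorem natDegree_le_card_add_one_mul_degT {F : Type*} [Field F] [Fintype F]
    {g : Polynomial (Polynomial F)} (hroot : ∀ u : F, g.eval (C u) ≠ 0)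
    (hsplit : SplitsCompletely g) :
    g.natDegree ≤ (Fintype.card F + 1) * degT g := by
  set φ := algebraMap F[X] (LaurentSeries F)
  have hφ : Function.Injective φ := Polynomial.algebraMap_hahnSeries_injective ℤ
  have hg : g ≠ 0 := by rintro rfl; simp at hroot
  set P := g.map φ
  have heval (u : F) : P.eval (HahnSeries.C u) = φ (g.eval (C u)) := by
    rw [show HahnSeries.C u = φ (C u) by simp [φ, Polynomial.algebraMap_hahnSeries_apply],
      eval_map_apply]
  have hupper : ∑ u : F, (P.eval (HahnSeries.C u)).order ≤ Fintype.card F * degT g := by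
    calc ∑ u : F, (P.eval (HahnSeries.C u)).order ≤ ∑ _u : F, (degT g : ℤ) :=
          Finset.sum_le_sum fun u _ => heval u ▸ (order_algebraMap_le_natDegree (hroot u)).trans
            (mod_cast natDegree_eval_C_le_degT g u)
      _ = Fintype.card F * degT g := by simp
  have hlower := card_roots_add_mul_order_leadingCoeff_le hsplit
    fun u => heval u ▸ (map_ne_zero_iff _ hφ).2 (hroot u)
  have hpoles : (P.roots.map poleOrder).sum ≤ P.leadingCoeff.order := by
    have := sum_poleOrder_roots_le_order_leadingCoeff
      (p := g.map (Polynomial.coeToPowerSeries.ringHom)) (by rw [map_map]; exact hsplit)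
    rwa [map_map] at this
  have hlc : P.leadingCoeff.order ≤ degT g := by
    rw [leadingCoeff_map_of_injective hφ]
    exact (order_algebraMap_le_natDegree (leadingCoeff_ne_zero.2 hg)).trans
      (mod_cast natDegree_coeff_le_degT g _)
  have hcard : P.roots.card = g.natDegree := by
    rw [← hsplit.natDegree_eq_card_roots, natDegree_map_eq_of_injective hφ]
  have : (g.natDegree : ℤ) ≤ (Fintype.card F + 1) * degT g := by
    rw [← hcard]
    nlinarith
  exact_mod_cast this

theorem height_weighted_average_general {F : Type*} [Field F] [Fintype F]
    (f : Polynomial (Polynomial F))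
    (hroot : ∀ u : F, f.eval (Polynomial.C u) ≠ 0)
    (hsplit : SplitsCompletely f)
    (hdT : (Fintype.card F + 1) * degT f = f.natDegree) :
    ∀ g : Polynomial (Polynomial F), g.IsPrimitive → Irreducible (toRat g) → g ∣ f →
      g.natDegree = (Fintype.card F + 1) * degT g ∧
        (Fintype.card F + 1) ∣ g.natDegree := by
  rintro g - - ⟨h, rfl⟩
  have hgh : g * h ≠ 0 := by rintro h0; simp [h0] at hroot
  have hg := left_ne_zero_of_mul hgh
  have hh := right_ne_zero_of_mul hgh
  have hg_le := natDegree_le_card_add_one_mul_degT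
    (fun u hu => hroot u (by rw [eval_mul, hu, zero_mul])) (hsplit.of_dvd hgh (dvd_mul_right g h))
  have hh_le := natDegree_le_card_add_one_mul_degT
    (fun u hu => hroot u (by rw [eval_mul, hu, mul_zero])) (hsplit.of_dvd hgh (dvd_mul_left h g))
  rw [degT_mul hg hh, natDegree_mul hg hh, mul_add] at hdT
  have hg_eq : g.natDegree = (Fintype.card F + 1) * degT g := by omega
  exact ⟨hg_eq, hg_eq ▸ dvd_mul_right _ _⟩

/-- If $f ∈ F_q[T][X]$ is nonconstant in $X$, has no root in $F_q$, splits
completely over $F_q((T))$ and satisfies $(q+1)\deg_T f = \deg_X f$, then every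
primitive irreducible factor $g$ of $f$ satisfies $\deg_X g = (q+1)\deg_T g$, and
$q+1$ divides $\deg_X g$. -/
theorem height_weighted_average {F : Type*} [Field F] [Fintype F]
    (f : Polynomial (Polynomial F)) (hdeg : 0 < f.natDegree)
    (hroot : ∀ u : F, f.eval (Polynomial.C u) ≠ 0)
    (hsplit : SplitsCompletely f)
    (hdT : (Fintype.card F + 1) * degT f = f.natDegree) :
    ∀ g : Polynomial (Polynomial F), g.IsPrimitive → Irreducible (toRat g) → g ∣ f →
      g.natDegree = (Fintype.card F + 1) * degT g ∧
        (Fintype.card F + 1) ∣ g.natDegree :=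
  height_weighted_average_general f hroot hsplit hdT
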